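/- Let P(r,s|a,b) be a nonsignaling box with V(P) nonempty, and define D(P) = sup over probability distributions ρ(a) on {1,…,A} of inf over ρ(r,𝐬|a)∈V(P) of the mutual information I(A;𝐒) of the channel ρ(𝐬|a)=Σ_r ρ(r,𝐬|a) with input ρ(a). Then for any real Bell coefficients B(r,s;a,b) and any η(a) with η(a) > 0 for all a, D(P) ≥ γ^{−1} Σ_{r,s,a,b} P(r,s|a,b)B(r,s;a,b) + K_η, where γ = Σ_a η(a), ρ(a) = η(a)/γ, and K_η = −log max_{𝐬∈𝓢^B} Σ_a ρ(a) max_r exp( η(a)^{−1} Σ_b B(r,s_b;a,b) ). -/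

import Mathlib

open scoped BigOperators

/-- A probability distribution on a finite type. -/
def IsDist {α : Type*} [Fintype α] (q : α → ℝ) : Prop :=
  (∀ x, 0 ≤ q x) ∧ ∑ x, q x = 1

/-- Mutual information of the channel `W` with input distribution `q`
(convention `0 · log 0 = 0`, automatic since `Real.log 0 = 0`). -/
noncomputable def mutInfo {X Y : Type*} [Fintype X] [Fintype Y]
    (W : Y → X → ℝ) (q : X → ℝ) : ℝ :=
  ∑ y, ∑ x, W y x * q x * Real.log (W y x / ∑ x', W y x' * q x')

/-- A nonsignaling box `P(r,s|a,b)`. -/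
def IsNSBox {R S : Type*} [Fintype R] [Fintype S] {A B : ℕ}
    (P : R → S → Fin A → Fin B → ℝ) : Prop :=
  (∀ r s a b, 0 ≤ P r s a b) ∧
  (∀ a b, ∑ r, ∑ s, P r s a b = 1) ∧
  (∀ a r b b', ∑ s, P r s a b = ∑ s, P r s a b') ∧
  (∀ b s a a', ∑ r, P r s a b = ∑ r, P r s a' b)

/-- Membership in the set `V(P)`: `ρ(r,𝐬|a)` is a conditional probability over
`r` and sequences `𝐬 ∈ 𝓢^B` whose marginal on `(r, s_b)` is `P(r,s|a,b)`. -/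
def MemV {R S : Type*} [Fintype R] [Fintype S] [DecidableEq S] {A B : ℕ}
    (P : R → S → Fin A → Fin B → ℝ)
    (ρ : R → (Fin B → S) → Fin A → ℝ) : Prop :=
  (∀ r ss a, 0 ≤ ρ r ss a) ∧
  (∀ a, ∑ r, ∑ ss : Fin B → S, ρ r ss a = 1) ∧
  (∀ a b r s, ∑ ss : Fin B → S, (if ss b = s then ρ r ss a else 0) = P r s a b)


/-- `D(P) = sup_{ρ(a)} inf_{ρ(r,𝐬|a) ∈ V(P)} I(A;𝐒)`. -/
noncomputable def DP {R S : Type*} [Fintype R] [Fintype S] [DecidableEq S]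
    {A B : ℕ} (P : R → S → Fin A → Fin B → ℝ) : ℝ :=
  sSup { d : ℝ | ∃ q : Fin A → ℝ, IsDist q ∧
    d = sInf { x : ℝ | ∃ ρ, MemV P ρ ∧
          x = mutInfo (fun ss a => ∑ r, ρ r ss a) q } }

/-! Fix the input distribution `q(a) = η(a)/γ` and put
`M(a,𝐬) = max_r exp(η(a)⁻¹ Σ_b B(r,s_b;a,b))`. For `ρ ∈ V(P)` the Bell value is an average of
`Σ_b B(r,s_b;a,b)` against `ρ(r,𝐬|a)`, so dividing it by `γ` bounds it by `E[log M(A,𝐒)]`.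
With `p(𝐬)` the output law and `Z = max_𝐬 Σ_a q(a) M(a,𝐬)`, the weights
`τ(a,𝐬) = q(a) p(𝐬) M(a,𝐬) / Z` have total mass at most one, so Gibbs' inequality for the joint
law `q(a) ρ(𝐬|a)` against `τ` gives the Donsker–Varadhan bound `E[log M] - log Z ≤ I(A;𝐒)`. -/

open Finset Real

lemma sub_le_mul_log_div {μ τ : ℝ} (hμ : 0 ≤ μ) (hτ : 0 < τ) : μ - τ ≤ μ * log (μ / τ) := by
  have hkl := mul_nonneg hτ.le (InformationTheory.klFun_nonneg (div_nonneg hμ hτ.le))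
  rw [InformationTheory.klFun_apply] at hkl
  field_simp at hkl
  linarith

lemma iSup_exp_pos {ι : Type*} [Finite ι] [Nonempty ι] (f : ι → ℝ) : 0 < ⨆ i, exp (f i) :=
  (exp_pos _).trans_le <|
    le_ciSup (Finite.bddAbove_range fun i => exp (f i)) (Classical.arbitrary ι)

lemma le_log_iSup_exp {ι : Type*} [Finite ι] (f : ι → ℝ) (i : ι) :
    f i ≤ log (⨆ j, exp (f j)) :=
  have : Nonempty ι := ⟨i⟩
  (le_log_iff_exp_le (iSup_exp_pos f)).2 (le_ciSup (Finite.bddAbove_range fun j => exp (f j)) i)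

section
variable {X Y : Type*} [Fintype X] [Fintype Y] {W : Y → X → ℝ} {q : X → ℝ}

lemma sum_channel_mul_eq_one (hW : ∀ x, ∑ y, W y x = 1) (hq : ∑ x, q x = 1) :
    ∑ y, ∑ x, W y x * q x = 1 := by
  simp only [sum_comm (γ := Y), ← sum_mul, hW, one_mul, hq]

lemma mutInfo_le_card (hq : ∀ x, 0 ≤ q x) (hW0 : ∀ y x, 0 ≤ W y x)
    (hW1 : ∀ x, ∑ y, W y x = 1) :
    mutInfo W q ≤ Fintype.card X := by
  have hterm : ∀ y x, W y x * q x * log (W y x / ∑ x', W y x' * q x') ≤ W y x := by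
    intro y x
    set p := ∑ x', W y x' * q x'
    rcases (mul_nonneg (hW0 y x) (hq x)).eq_or_lt with hμ | hμ
    · rw [← hμ, zero_mul]
      exact hW0 y x
    have hμp : W y x * q x ≤ p :=
      single_le_sum (fun x' _ => mul_nonneg (hW0 y x') (hq x')) (mem_univ x)
    have hp : 0 < p := hμ.trans_le hμp
    calc W y x * q x * log (W y x / p) ≤ W y x * q x * (W y x / p) := by
          gcongr
          have hW : 0 < W y x := pos_of_mul_pos_left hμ (hq x)
          linarith [log_le_sub_one_of_pos (div_pos hW hp)]
      _ = W y x * (W y x * q x / p) := by ring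
      _ ≤ W y x * 1 := by gcongr; exacts [hW0 y x, (div_le_one hp).2 hμp]
      _ = W y x := mul_one _
  calc mutInfo W q ≤ ∑ y, ∑ x, W y x := sum_le_sum fun y _ => sum_le_sum fun x _ => hterm y x
    _ = Fintype.card X := by simp [sum_comm (γ := Y), hW1]

lemma sum_mul_log_sub_log_le_mutInfo (M : X → Y → ℝ) {Z : ℝ}
    (hq0 : ∀ x, 0 ≤ q x) (hq1 : ∑ x, q x = 1)
    (hW0 : ∀ y x, 0 ≤ W y x) (hW1 : ∀ x, ∑ y, W y x = 1)
    (hM : ∀ x y, 0 < M x y) (hZ : 0 < Z) (hMZ : ∀ y, ∑ x, q x * M x y ≤ Z) :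
    ∑ y, ∑ x, W y x * q x * log (M x y) - log Z ≤ mutInfo W q := by
  set p : Y → ℝ := fun y => ∑ x, W y x * q x
  set τ : Y → X → ℝ := fun y x => q x * p y * M x y / Z with hτ
  have hp0 : ∀ y, 0 ≤ p y := fun y => sum_nonneg fun x _ => mul_nonneg (hW0 y x) (hq0 x)
  have hτ0 : ∀ y x, 0 ≤ τ y x := fun y x => by positivity [hq0 x, hp0 y, (hM x y).le]
  have hτ1 : ∑ y, ∑ x, τ y x ≤ 1 := by
    calc ∑ y, ∑ x, τ y x = ∑ y, (∑ x, q x * M x y) / Z * p y := by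
          simp only [hτ, sum_div, sum_mul]; congr! 2; ring
      _ ≤ ∑ y, p y := by
          gcongr with y
          exact mul_le_of_le_one_left (hp0 y) ((div_le_one hZ).2 (hMZ y))
      _ = 1 := sum_channel_mul_eq_one hW1 hq1
  have hterm : ∀ y x, W y x * q x - τ y x ≤
      W y x * q x * log (W y x / p y) - W y x * q x * log (M x y) + W y x * q x * log Z := by
    intro y x
    rcases (mul_nonneg (hW0 y x) (hq0 x)).eq_or_lt with hμ | hμ
    · simp only [← hμ, zero_mul, zero_sub, sub_zero, zero_add, neg_nonpos]
      exact hτ0 y x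
    have hW : 0 < W y x := pos_of_mul_pos_left hμ (hq0 x)
    have hqx : 0 < q x := pos_of_mul_pos_right hμ (hW0 y x)
    have hpy : 0 < p y := hμ.trans_le <|
      single_le_sum (fun x' _ => mul_nonneg (hW0 y x') (hq0 x')) (mem_univ x)
    have hratio : W y x * q x / τ y x = W y x / p y / M x y * Z := by
      simp only [hτ]; field_simp
    calc W y x * q x - τ y x ≤ W y x * q x * log (W y x * q x / τ y x) :=
          sub_le_mul_log_div hμ.le (by positivity [hM x y])
      _ = _ := by
          rw [hratio, log_mul (by positivity [hM x y]) hZ.ne',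
            log_div (by positivity) (hM x y).ne']
          ring
  have hsum := sum_le_sum fun y (_ : y ∈ univ) => sum_le_sum fun x (_ : x ∈ univ) => hterm y x
  simp only [sum_add_distrib, sum_sub_distrib, ← sum_mul, sum_channel_mul_eq_one hW1 hq1,
    one_mul] at hsum
  rw [mutInfo]
  linarith
end

lemma isDist_div_sum {α : Type*} [Fintype α] [Nonempty α] {η : α → ℝ} (hη : ∀ a, 0 < η a) :
    IsDist fun a => η a / ∑ a', η a' := by
  have hγ : 0 < ∑ a', η a' := sum_pos (fun a _ => hη a) univ_nonempty
  exact ⟨fun a => (div_pos (hη a) hγ).le, by rw [← sum_div, div_self hγ.ne']⟩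

section
variable {R S : Type*} [Fintype R] [Fintype S] [DecidableEq S] {A B : ℕ}
  {P : R → S → Fin A → Fin B → ℝ} {ρ : R → (Fin B → S) → Fin A → ℝ}

theorem MemV.sum_mul_eq (hρ : MemV P ρ) (f : R → S → Fin A → Fin B → ℝ) :
    ∑ r, ∑ s, ∑ a, ∑ b, P r s a b * f r s a b
      = ∑ ss : Fin B → S, ∑ a, ∑ r, ρ r ss a * ∑ b, f r (ss b) a b := by
  have hfiber : ∀ r a b,
      ∑ s, P r s a b * f r s a b = ∑ ss : Fin B → S, ρ r ss a * f r (ss b) a b := by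
    intro r a b
    simp only [← hρ.2.2 a b r, sum_mul, ite_mul, zero_mul]
    rw [sum_comm]
    simp
  calc ∑ r, ∑ s, ∑ a, ∑ b, P r s a b * f r s a b
      = ∑ r, ∑ a, ∑ b, ∑ s, P r s a b * f r s a b :=
        sum_congr rfl fun r _ => sum_comm.trans (sum_congr rfl fun a _ => sum_comm)
    _ = ∑ r, ∑ a, ∑ ss : Fin B → S, ∑ b, ρ r ss a * f r (ss b) a b := by
        simp only [hfiber]
        exact sum_congr rfl fun r _ => sum_congr rfl fun a _ => sum_comm
    _ = ∑ ss : Fin B → S, ∑ a, ∑ r, ρ r ss a * ∑ b, f r (ss b) a b := by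
        simp only [mul_sum]
        rw [sum_comm]
        refine (sum_congr rfl fun a _ => sum_comm).trans sum_comm

theorem MemV.nonempty (hρ : MemV P ρ) (a : Fin A) : Nonempty R ∧ Nonempty (Fin B → S) := by
  obtain ⟨r, -, hr⟩ := exists_ne_zero_of_sum_ne_zero (hρ.2.1 a ▸ one_ne_zero)
  obtain ⟨ss, -, -⟩ := exists_ne_zero_of_sum_ne_zero hr
  exact ⟨⟨r⟩, ⟨ss⟩⟩

theorem MemV.sum_channel_eq_one (hρ : MemV P ρ) (a : Fin A) :
    ∑ ss : Fin B → S, ∑ r, ρ r ss a = 1 := by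
  rw [sum_comm]
  exact hρ.2.1 a

theorem MemV.channel_nonneg (hρ : MemV P ρ) (ss : Fin B → S) (a : Fin A) :
    0 ≤ ∑ r, ρ r ss a :=
  sum_nonneg fun r _ => hρ.1 r ss a

theorem MemV.inv_mul_bell_le (hρ : MemV P ρ) (Bc : R → S → Fin A → Fin B → ℝ)
    {η : Fin A → ℝ} (hη : ∀ a, 0 < η a) {γ : ℝ} (hγ : 0 < γ) :
    γ⁻¹ * ∑ r, ∑ s, ∑ a, ∑ b, P r s a b * Bc r s a b
      ≤ ∑ ss : Fin B → S, ∑ a, (∑ r, ρ r ss a) * (η a / γ) *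
          log (⨆ r, exp ((η a)⁻¹ * ∑ b, Bc r (ss b) a b)) := by
  rw [hρ.sum_mul_eq, mul_sum]
  refine sum_le_sum fun ss _ => ?_
  rw [mul_sum]
  refine sum_le_sum fun a _ => ?_
  rw [mul_sum, sum_mul, sum_mul]
  refine sum_le_sum fun r _ => ?_
  calc γ⁻¹ * (ρ r ss a * ∑ b, Bc r (ss b) a b)
      = ρ r ss a * (η a / γ) * ((η a)⁻¹ * ∑ b, Bc r (ss b) a b) := by
        field_simp [(hη a).ne']
    _ ≤ _ := by
        have := hρ.1 r ss a
        have := hη a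
        gcongr
        exact le_log_iSup_exp (fun r => (η a)⁻¹ * ∑ b, Bc r (ss b) a b) r

theorem MemV.bell_sub_log_le_mutInfo [Nonempty (Fin A)] (hρ : MemV P ρ)
    (Bc : R → S → Fin A → Fin B → ℝ) {η : Fin A → ℝ} (hη : ∀ a, 0 < η a) :
    (∑ a, η a)⁻¹ * (∑ r, ∑ s, ∑ a, ∑ b, P r s a b * Bc r s a b)
      + (-log (⨆ ss : Fin B → S,
          ∑ a, (η a / ∑ a', η a') * ⨆ r, exp ((η a)⁻¹ * ∑ b, Bc r (ss b) a b)))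
    ≤ mutInfo (fun ss a => ∑ r, ρ r ss a) fun a => η a / ∑ a', η a' := by
  obtain ⟨a₀⟩ := ‹Nonempty (Fin A)›
  have : Nonempty R := (hρ.nonempty a₀).1
  obtain ⟨ss₀⟩ := (hρ.nonempty a₀).2
  have hq := isDist_div_sum hη
  set γ := ∑ a, η a
  have hγ : 0 < γ := sum_pos (fun a _ => hη a) univ_nonempty
  set M : Fin A → (Fin B → S) → ℝ := fun a ss => ⨆ r, exp ((η a)⁻¹ * ∑ b, Bc r (ss b) a b)
  have hM : ∀ a ss, 0 < M a ss := fun a ss => iSup_exp_pos _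
  have hMZ : ∀ ss, ∑ a, η a / γ * M a ss ≤ ⨆ ss', ∑ a, η a / γ * M a ss' := fun ss =>
    le_ciSup (Finite.bddAbove_range fun ss' => ∑ a, η a / γ * M a ss') ss
  have hZ : 0 < ⨆ ss, ∑ a, η a / γ * M a ss :=
    (sum_pos (fun a _ => mul_pos (div_pos (hη a) hγ) (hM a ss₀)) univ_nonempty).trans_le (hMZ ss₀)
  have hDV := sum_mul_log_sub_log_le_mutInfo M hq.1 hq.2 hρ.channel_nonneg
    hρ.sum_channel_eq_one hM hZ hMZ
  have hBell := hρ.inv_mul_bell_le Bc hη hγ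
  linarith
end

lemma le_DP {R S : Type*} [Fintype R] [Fintype S] [DecidableEq S] {A B : ℕ}
    {P : R → S → Fin A → Fin B → ℝ} (hne : ∃ ρ, MemV P ρ) {q : Fin A → ℝ} (hq : IsDist q)
    {c : ℝ}
    (hc : ∀ ρ, MemV P ρ → c ≤ mutInfo (fun ss a => ∑ r, ρ r ss a) q) : c ≤ DP P := by
  obtain ⟨ρ₀, hρ₀⟩ := hne
  have hbdd : BddAbove {d : ℝ | ∃ q : Fin A → ℝ, IsDist q ∧
      d = sInf {x : ℝ | ∃ ρ, MemV P ρ ∧ x = mutInfo (fun ss a => ∑ r, ρ r ss a) q}} := by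
    refine ⟨Fintype.card (Fin A), ?_⟩
    rintro d ⟨q', hq', rfl⟩
    by_cases hbb :
        BddBelow {x : ℝ | ∃ ρ, MemV P ρ ∧ x = mutInfo (fun ss a => ∑ r, ρ r ss a) q'}
    · exact (csInf_le hbb ⟨ρ₀, hρ₀, rfl⟩).trans
        (mutInfo_le_card hq'.1 hρ₀.channel_nonneg hρ₀.sum_channel_eq_one)
    · rw [Real.sInf_of_not_bddBelow hbb]
      positivity
  refine le_trans ?_ (le_csSup hbdd ⟨q, hq, rfl⟩)
  refine le_csInf ⟨_, ρ₀, hρ₀, rfl⟩ ?_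
  rintro x ⟨ρ, hρ, rfl⟩
  exact hc ρ hρ

lemma DP_fin_zero {R S : Type*} [Fintype R] [Fintype S] [DecidableEq S] {B : ℕ}
    (P : R → S → Fin 0 → Fin B → ℝ) : DP P = 0 := by
  rw [DP]
  convert Real.sSup_empty using 2
  refine Set.eq_empty_of_forall_notMem fun d hd => ?_
  obtain ⟨q, ⟨_, hq⟩, _⟩ := hd
  simp at hq

theorem stmt9_general {R S : Type*} [Fintype R] [Fintype S] [DecidableEq S]
    {A B : ℕ}
    (P : R → S → Fin A → Fin B → ℝ)
    (hne : ∃ ρ, MemV P ρ)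
    (Bc : R → S → Fin A → Fin B → ℝ)
    (η : Fin A → ℝ) (hη : ∀ a, 0 < η a) :
    (∑ a, η a)⁻¹ * (∑ r, ∑ s, ∑ a, ∑ b, P r s a b * Bc r s a b)
      + (-Real.log (⨆ ss : Fin B → S,
          ∑ a, (η a / ∑ a', η a') *
            ⨆ r, Real.exp ((η a)⁻¹ * ∑ b, Bc r (ss b) a b)))
    ≤ DP P := by
  rcases A.eq_zero_or_pos with rfl | hA
  -- With no inputs both sides are junk zeros: `γ⁻¹ = 0⁻¹ = 0`, `log 0 = 0` and `DP P = sSup ∅`.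
  · simp [DP_fin_zero]
  · have : Nonempty (Fin A) := Fin.pos_iff_nonempty.mp hA
    exact le_DP hne (isDist_div_sum hη) fun _ hρ => MemV.bell_sub_log_le_mutInfo hρ Bc hη

/-- For every Bell coefficients `B(r,s;a,b)` and strictly positive `η(a)`,
`D(P) ≥ γ⁻¹ Σ_{r,s,a,b} P(r,s|a,b) B(r,s;a,b) + K_η`, with `γ = Σ_a η(a)`,
`ρ(a) = η(a)/γ` and
`K_η = −log max_𝐬 Σ_a ρ(a) max_r exp(η(a)⁻¹ Σ_b B(r,s_b;a,b))`. -/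
theorem stmt9 {R S : Type*} [Fintype R] [Fintype S] [DecidableEq S]
    [Nonempty R] [Nonempty S] {A B : ℕ}
    (P : R → S → Fin A → Fin B → ℝ) (hP : IsNSBox P)
    (hne : ∃ ρ, MemV P ρ)
    (Bc : R → S → Fin A → Fin B → ℝ)
    (η : Fin A → ℝ) (hη : ∀ a, 0 < η a) :
    (∑ a, η a)⁻¹ * (∑ r, ∑ s, ∑ a, ∑ b, P r s a b * Bc r s a b)
      + (-Real.log (⨆ ss : Fin B → S,
          ∑ a, (η a / ∑ a', η a') *
            ⨆ r, Real.exp ((η a)⁻¹ * ∑ b, Bc r (ss b) a b)))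
    ≤ DP P :=
  stmt9_general P hne Bc η hη
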